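/- Let X₀,…,X_{n-1} be independent complex-valued random variables with |X_i| = 1 almost surely. Then for every α ≥ 0, P(|CF_n(s) − E[CF_n(s)]| ≥ α) ≤ 2 exp(−α²/8). -/

import Mathlib

open MeasureTheory Finset

noncomputable def ofdm (n : ℕ) (T : ℝ) (x : Fin n → ℂ) (t : ℝ) : ℂ :=
  ((Real.sqrt n : ℝ) : ℂ)⁻¹ *
    ∑ i : Fin n, x i * Complex.exp (Complex.I * ((2 * Real.pi * (i : ℕ) * t / T : ℝ) : ℂ))

noncomputable def crest (n : ℕ) (T : ℝ) (x : Fin n → ℂ) : ℝ :=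
  sSup ((fun t => ‖ofdm n T x t‖) '' Set.Icc (0 : ℝ) T)

/-!
The crest factor is `1/√n`-Lipschitz in each symbol, so after pushing the symbols into the closed
unit disc it changes by at most `2/√n` when a single symbol changes. By independence the symbol
vector has a product law, and McDiarmid's inequality (the Doob martingale along the coordinates has
increments that are sub-Gaussian by Hoeffding's lemma) makes the centred crest factor sub-Gaussian
with variance proxy `n · (1/√n)² = 1`. The Chernoff bound on both tails then gives
`2 exp (-α²/2)`, which is stronger than the claim.
-/

open ProbabilityTheory Real
open scoped NNReal

def HasBoundedDifferences {ι E : Type*} (f : (ι → E) → ℝ) (c : ι → ℝ≥0) : Prop :=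
  ∀ x y i, (∀ j, j ≠ i → x j = y j) → |f x - f y| ≤ c i

namespace HasBoundedDifferences

variable {ι E : Type*} {f : (ι → E) → ℝ} {c : ι → ℝ≥0}

lemma abs_sub_le_sum [Fintype ι] (hf : HasBoundedDifferences f c) (x y : ι → E) :
    |f x - f y| ≤ ∑ i, (c i : ℝ) := by
  classical
  suffices h : ∀ s : Finset ι, |f (s.piecewise x y) - f y| ≤ ∑ i ∈ s, (c i : ℝ) by
    simpa using h Finset.univ
  intro s
  induction s using Finset.induction_on with
  | empty => simp
  | insert i s hi ih =>
    have hstep : |f ((insert i s).piecewise x y) - f (s.piecewise x y)| ≤ c i :=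
      hf _ _ i fun j hj => by rw [Finset.piecewise_insert, Function.update_of_ne hj]
    rw [Finset.sum_insert hi]
    exact (abs_sub_le _ _ _).trans (add_le_add hstep ih)

lemma exists_abs_le [Fintype ι] [Nonempty (ι → E)] (hf : HasBoundedDifferences f c) :
    ∃ C, ∀ x, |f x| ≤ C := by
  obtain ⟨x₀⟩ := ‹Nonempty (ι → E)›
  exact ⟨|f x₀| + ∑ i, (c i : ℝ), fun x => by
    linarith [hf.abs_sub_le_sum x x₀, abs_sub_abs_le_abs_sub (f x) (f x₀)]⟩

lemma comp_cons {n : ℕ} {f : (Fin (n + 1) → E) → ℝ} {c : Fin (n + 1) → ℝ≥0}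
    (hf : HasBoundedDifferences f c) (z : E) :
    HasBoundedDifferences (fun y => f (Fin.cons z y)) (fun i => c i.succ) := by
  intro x y i hxy
  refine hf _ _ i.succ fun j hj => ?_
  cases j using Fin.cases with
  | zero => rfl
  | succ j => simpa using hxy j (fun h => hj (h ▸ rfl))

lemma abs_cons_sub_cons_le {n : ℕ} {f : (Fin (n + 1) → E) → ℝ} {c : Fin (n + 1) → ℝ≥0}
    (hf : HasBoundedDifferences f c) (a b : E) (y : Fin n → E) :
    |f (Fin.cons a y) - f (Fin.cons b y)| ≤ c 0 :=
  hf _ _ 0 fun j hj => by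
    cases j using Fin.cases with
    | zero => exact absurd rfl hj
    | succ j => simp

end HasBoundedDifferences

lemma hasSubgaussianMGF_sub_integral_of_abs_sub_le {Ω : Type*} [MeasurableSpace Ω]
    {μ : Measure Ω} [IsProbabilityMeasure μ] {X : Ω → ℝ} {c : ℝ≥0} (hX : AEMeasurable X μ)
    (hc : ∀ a b, |X a - X b| ≤ c) :
    HasSubgaussianMGF (fun ω => X ω - μ[X]) ((c / 2) ^ 2) μ := by
  have := nonempty_of_isProbabilityMeasure μ
  obtain ⟨ω₀⟩ := id this
  have hbdd : BddBelow (Set.range X) :=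
    ⟨X ω₀ - c, by rintro _ ⟨ω, rfl⟩; linarith [(abs_le.1 (hc ω₀ ω)).2]⟩
  have hIcc : ∀ ω, X ω ∈ Set.Icc (⨅ ω, X ω) ((⨅ ω, X ω) + c) := fun ω =>
    ⟨ciInf_le hbdd ω, by
      linarith [le_ciInf fun ω' => show X ω - c ≤ X ω' by linarith [(abs_le.1 (hc ω ω')).2]]⟩
  simpa using hasSubgaussianMGF_of_mem_Icc hX (ae_of_all _ hIcc)

lemma ProbabilityTheory.HasSubgaussianMGF.add_prod_of_forall {E F : Type*} [MeasurableSpace E]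
    [MeasurableSpace F]
    {μ : Measure E} {ν : Measure F} [SFinite μ] [SFinite ν] {X : E → ℝ} {Y : E × F → ℝ}
    {cX cY : ℝ≥0} (hX : HasSubgaussianMGF X cX μ)
    (hY : ∀ z, HasSubgaussianMGF (fun y => Y (z, y)) cY ν)
    (hint : ∀ t, Integrable (fun p => exp (t * (X p.1 + Y p))) (μ.prod ν)) :
    HasSubgaussianMGF (fun p => X p.1 + Y p) (cX + cY) (μ.prod ν) := by
  refine ⟨hint, fun t => ?_⟩
  have hint' : Integrable (fun p => exp (t * X p.1) * exp (t * Y p)) (μ.prod ν) := by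
    simpa only [mul_add, exp_add] using hint t
  calc mgf (fun p => X p.1 + Y p) (μ.prod ν) t
      = ∫ z, exp (t * X z) * mgf (fun y => Y (z, y)) ν t ∂μ := by
        simp only [mgf, mul_add, exp_add]
        rw [integral_prod _ hint']
        simp only [integral_const_mul]
    _ ≤ ∫ z, exp (t * X z) * exp (cY * t ^ 2 / 2) ∂μ :=
        integral_mono_of_nonneg (ae_of_all _ fun z => mul_nonneg (exp_nonneg _) (mgf_nonneg))
          ((hX.integrable_exp_mul t).mul_const _)
          (ae_of_all _ fun z => mul_le_mul_of_nonneg_left ((hY z).mgf_le t) (exp_nonneg _))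
    _ = mgf X μ t * exp (cY * t ^ 2 / 2) := integral_mul_const _ _
    _ ≤ exp (cX * t ^ 2 / 2) * exp (cY * t ^ 2 / 2) := by gcongr; exact hX.mgf_le t
    _ = exp ((cX + cY : ℝ≥0) * t ^ 2 / 2) := by rw [← exp_add]; push_cast; ring_nf

lemma hasSubgaussianMGF_prod_sub_integral {E F : Type*} [MeasurableSpace E] [MeasurableSpace F]
    {μ : Measure E} {ν : Measure F} [IsProbabilityMeasure μ] [IsProbabilityMeasure ν]
    {g : E × F → ℝ} {c d : ℝ≥0} (hg : Measurable g) {C : ℝ} (hC : ∀ p, |g p| ≤ C)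
    (hosc : ∀ a b y, |g (a, y) - g (b, y)| ≤ c)
    (hsec : ∀ z, HasSubgaussianMGF (fun y => g (z, y) - ∫ y', g (z, y') ∂ν) d ν) :
    HasSubgaussianMGF (fun p => g p - ∫ q, g q ∂(μ.prod ν)) ((c / 2) ^ 2 + d) (μ.prod ν) := by
  set H : E → ℝ := fun z => ∫ y, g (z, y) ∂ν
  have hg_int : Integrable g (μ.prod ν) := .of_bound hg.aestronglyMeasurable C (ae_of_all _ hC)
  have hsec_int : ∀ z, Integrable (fun y => g (z, y)) ν := fun z =>
    .of_bound (hg.comp measurable_prodMk_left).aestronglyMeasurable C (ae_of_all _ fun y => hC _)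
  have hH : Measurable H := hg.stronglyMeasurable.integral_prod_right'.measurable
  have hH_osc : ∀ a b, |H a - H b| ≤ c := fun a b => by
    rw [← integral_sub (hsec_int a) (hsec_int b)]
    simpa using norm_integral_le_of_norm_le_const (μ := ν)
      (f := fun y => g (a, y) - g (b, y)) (ae_of_all _ fun y => by simpa using hosc a b y)
  have hsplit :
      (fun p => g p - ∫ q, g q ∂(μ.prod ν)) = fun p => (H p.1 - μ[H]) + (g p - H p.1) := by
    funext p; rw [integral_prod g hg_int]; ring
  rw [hsplit]
  refine (hasSubgaussianMGF_sub_integral_of_abs_sub_le hH.aemeasurable hH_osc).add_prod_of_forall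
    hsec fun t => integrable_exp_mul_of_mem_Icc (a := -C - μ[H]) (b := C - μ[H])
      (by fun_prop) (ae_of_all _ fun p => ?_)
  have := abs_le.1 (hC p)
  constructor <;> linarith

theorem HasBoundedDifferences.hasSubgaussianMGF_pi {E : Type*} [MeasurableSpace E] {n : ℕ}
    {ν : Fin n → Measure E} [∀ i, IsProbabilityMeasure (ν i)] {f : (Fin n → E) → ℝ}
    {c : Fin n → ℝ≥0} (hf : HasBoundedDifferences f c) (hfm : Measurable f) :
    HasSubgaussianMGF (fun x => f x - ∫ y, f y ∂Measure.pi ν) (∑ i, (c i / 2) ^ 2)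
      (Measure.pi ν) := by
  induction n with
  | zero =>
    have hconst : ∀ x, f x - ∫ y, f y ∂Measure.pi ν = 0 := fun x => by
      rw [integral_congr_ae (ae_of_all _ fun y => congrArg f (Subsingleton.elim y x))]
      simp
    simp [hconst]
  | succ n ih =>
    set split := MeasurableEquiv.piFinSuccAbove (fun _ : Fin (n + 1) => E) 0
    have hsplit : MeasurePreserving split (Measure.pi ν)
        ((ν 0).prod (Measure.pi fun j => ν j.succ)) := by
      simpa only [Fin.succAbove_zero] using measurePreserving_piFinSuccAbove ν 0
    have hcons : ∀ z y, split.symm (z, y) = Fin.cons z y := fun z y => by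
      simp [split, MeasurableEquiv.piFinSuccAbove_symm_apply, Fin.insertNthEquiv,
        Fin.insertNth_zero']
    have := nonempty_of_isProbabilityMeasure (Measure.pi ν)
    obtain ⟨C, hC⟩ := hf.exists_abs_le
    have key := hasSubgaussianMGF_prod_sub_integral (μ := ν 0)
      (ν := Measure.pi fun j => ν j.succ) (hfm.comp split.symm.measurable)
      (fun p => hC _)
      (fun a b y => by simpa [hcons] using hf.abs_cons_sub_cons_le a b y)
      (fun z => by
        simpa [hcons] using ih (ν := fun j => ν j.succ) (hf.comp_cons z)
          (by simpa [Function.comp_def, hcons] using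
            hfm.comp (split.symm.measurable.comp measurable_prodMk_left)))
    rw [← hsplit.integral_comp', ← hsplit.map_eq] at key
    convert key.of_map hsplit.measurable.aemeasurable using 1
    · funext x
      simp only [Function.comp_apply, MeasurableEquiv.symm_apply_apply]
    · rw [Fin.sum_univ_succ]

lemma ProbabilityTheory.HasSubgaussianMGF.measureReal_abs_ge_le {Ω : Type*} [MeasurableSpace Ω]
    {μ : Measure Ω} [IsFiniteMeasure μ] {X : Ω → ℝ} {c : ℝ≥0} (h : HasSubgaussianMGF X c μ)
    {ε : ℝ} (hε : 0 ≤ ε) :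
    μ.real {ω | ε ≤ |X ω|} ≤ 2 * exp (-ε ^ 2 / (2 * c)) :=
  calc μ.real {ω | ε ≤ |X ω|} ≤ μ.real ({ω | ε ≤ X ω} ∪ {ω | ε ≤ (-X) ω}) :=
        measureReal_mono fun ω (hω : ε ≤ |X ω|) => le_abs.1 hω
    _ ≤ μ.real {ω | ε ≤ X ω} + μ.real {ω | ε ≤ (-X) ω} := measureReal_union_le _ _
    _ ≤ exp (-ε ^ 2 / (2 * c)) + exp (-ε ^ 2 / (2 * c)) :=
        add_le_add (h.measure_ge_le hε) (h.neg.measure_ge_le hε)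
    _ = 2 * exp (-ε ^ 2 / (2 * c)) := by ring

section Crest

variable {n : ℕ} {T : ℝ}

lemma norm_ofdm_le (x : Fin n → ℂ) (t : ℝ) :
    ‖ofdm n T x t‖ ≤ (√n)⁻¹ * ∑ i, ‖x i‖ := by
  rw [ofdm, norm_mul, norm_inv, Complex.norm_real, Real.norm_of_nonneg (Real.sqrt_nonneg _)]
  gcongr
  refine (norm_sum_le _ _).trans (Finset.sum_le_sum fun i _ => ?_)
  rw [norm_mul, mul_comm Complex.I, Complex.norm_exp_ofReal_mul_I, mul_one]

lemma ofdm_sub (x y : Fin n → ℂ) (t : ℝ) :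
    ofdm n T x t - ofdm n T y t = ofdm n T (x - y) t := by
  simp only [ofdm, ← mul_sub, ← Finset.sum_sub_distrib, Pi.sub_apply, sub_mul]

lemma bddAbove_norm_ofdm (x : Fin n → ℂ) :
    BddAbove ((fun t => ‖ofdm n T x t‖) '' Set.Icc 0 T) :=
  ⟨_, by rintro _ ⟨t, -, rfl⟩; exact norm_ofdm_le x t⟩

lemma crest_le_add (hT : 0 ≤ T) (x y : Fin n → ℂ) :
    crest n T x ≤ crest n T y + (√n)⁻¹ * ∑ i, ‖x i - y i‖ := by
  refine csSup_le ((Set.nonempty_Icc.2 hT).image _) ?_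
  rintro _ ⟨t, ht, rfl⟩
  have hy : ‖ofdm n T y t‖ ≤ crest n T y := le_csSup (bddAbove_norm_ofdm y) ⟨t, ht, rfl⟩
  have hxy : ‖ofdm n T x t - ofdm n T y t‖ ≤ (√n)⁻¹ * ∑ i, ‖x i - y i‖ := by
    simpa [ofdm_sub] using norm_ofdm_le (T := T) (x - y) t
  linarith [norm_le_norm_add_norm_sub' (ofdm n T x t) (ofdm n T y t)]

lemma abs_crest_sub_le (hT : 0 ≤ T) (x y : Fin n → ℂ) :
    |crest n T x - crest n T y| ≤ (√n)⁻¹ * ∑ i, ‖x i - y i‖ := by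
  have hyx := crest_le_add hT y x
  simp only [norm_sub_rev (y _)] at hyx
  rw [abs_sub_le_iff]
  constructor <;> linarith [crest_le_add hT x y]

lemma continuous_crest (hT : 0 ≤ T) : Continuous (crest n T) := by
  refine (LipschitzWith.of_dist_le' (K := (√n)⁻¹ * n) fun x y => ?_).continuous
  rw [Real.dist_eq, mul_assoc]
  refine (abs_crest_sub_le hT x y).trans ?_
  gcongr
  simpa [dist_eq_norm] using
    Finset.sum_le_card_nsmul Finset.univ _ _ fun i _ => dist_le_pi_dist x y i

lemma hasBoundedDifferences_crest_comp (hT : 0 ≤ T) {P : ℂ → ℂ} (hP : ∀ z, ‖P z‖ ≤ 1) :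
    HasBoundedDifferences (fun x => crest n T (fun j => P (x j))) (fun _ => 2 / NNReal.sqrt n) := by
  intro x y i hxy
  refine (abs_crest_sub_le hT _ _).trans ?_
  rw [Finset.sum_eq_single i (fun j _ hj => by simp [hxy j hj]) (by simp)]
  calc (√n)⁻¹ * ‖P (x i) - P (y i)‖ ≤ (√n)⁻¹ * 2 := by
        gcongr; linarith [norm_sub_le (P (x i)) (P (y i)), hP (x i), hP (y i)]
    _ = _ := by simp [div_eq_inv_mul]

end Crest

lemma norm_indicator_closedBall_le {E : Type*} [SeminormedAddCommGroup E] {r : ℝ} (hr : 0 ≤ r)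
    (z : E) : ‖(Metric.closedBall 0 r).indicator id z‖ ≤ r := by
  by_cases hz : z ∈ Metric.closedBall 0 r
  · simpa [Set.indicator_of_mem hz] using hz
  · simpa [Set.indicator_of_notMem hz] using hr

theorem stmt_5 {Ω : Type*} [MeasurableSpace Ω] (μ : Measure Ω) [IsProbabilityMeasure μ]
    (n : ℕ) (hn : 0 < n) (T : ℝ) (hT : 0 < T)
    (X : Fin n → Ω → ℂ) (hmeas : ∀ j, Measurable (X j))
    (hindep : ProbabilityTheory.iIndepFun X μ)
    (hunit : ∀ j, ∀ᵐ ω ∂μ, ‖X j ω‖ = 1)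
    (α : ℝ) (hα : 0 ≤ α) :
    (μ {ω | α ≤ |crest n T (fun j => X j ω) -
        ∫ ω', crest n T (fun j => X j ω') ∂μ|}).toReal ≤
      2 * Real.exp (-α ^ 2 / 8) := by
  -- `P` agrees with the identity on the unit circle, where the `X j` live almost surely, and makes
  -- the crest factor have bounded differences on all of `ℂⁿ`.
  set P : ℂ → ℂ := (Metric.closedBall 0 1).indicator id
  set F : (Fin n → ℂ) → ℝ := fun x => crest n T fun j => P (x j)
  have hF : HasBoundedDifferences F _ :=
    hasBoundedDifferences_crest_comp hT.le (norm_indicator_closedBall_le zero_le_one)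
  have hFm : Measurable F := (continuous_crest hT.le).measurable.comp <| measurable_pi_lambda _
    fun j => (measurable_id.indicator measurableSet_closedBall).comp (measurable_pi_apply j)
  have hXm : Measurable fun ω j => X j ω := measurable_pi_lambda _ hmeas
  have hlaw : μ.map (fun ω j => X j ω) = Measure.pi fun j => μ.map (X j) :=
    hindep.map_fun_eq_pi_map fun j => (hmeas j).aemeasurable
  have hcrest : (F ∘ fun ω j => X j ω) =ᵐ[μ] fun ω => crest n T fun j => X j ω := by
    filter_upwards [ae_all_iff.2 hunit] with ω hω
    simp [F, P, Set.indicator_of_mem, hω]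
  have hmean :
      ∫ x, F x ∂Measure.pi (fun j => μ.map (X j)) = ∫ ω, crest n T (fun j => X j ω) ∂μ := by
    rw [← hlaw, integral_map hXm.aemeasurable hFm.aestronglyMeasurable]
    exact integral_congr_ae hcrest
  have hparam : ∑ _i : Fin n, (2 / NNReal.sqrt n / 2) ^ 2 = 1 := by
    have : (n : ℝ≥0) ≠ 0 := by exact_mod_cast hn.ne'
    simp only [Finset.sum_const, Finset.card_univ, Fintype.card_fin, nsmul_eq_mul, div_pow,
      NNReal.sq_sqrt]
    field_simp
  have hν := fun j => Measure.isProbabilityMeasure_map (μ := μ) (hmeas j).aemeasurable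
  have hsub := hF.hasSubgaussianMGF_pi (ν := fun j => μ.map (X j)) hFm
  rw [← hlaw, hparam] at hsub
  have key := (hsub.of_map hXm.aemeasurable).congr (hcrest.fun_comp (· - _))
  rw [hlaw, hmean] at key
  calc _ ≤ 2 * exp (-α ^ 2 / (2 * (1 : ℝ≥0))) := key.measureReal_abs_ge_le hα
    _ ≤ 2 * exp (-α ^ 2 / 8) := by gcongr 2 * exp ?_; push_cast; linarith [sq_nonneg α]
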